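/- arXiv:1909.04653 — 2 statements merged into one kernel-verified Lean document; each statement's English description precedes it below -/
import Mathlib

section
/- (Lemma: aᵀa* stays positive and bounded.) Suppose a* ≠ 0, (1/20)‖a*‖₂² ≤ a_0ᵀa* ≤ 2‖a*‖₂², η_a < 2π/(π−1), and the sequence a_{t+1} = a_t − η_a G_a(w_t, a_t) is generated along any sequence (w_t) with, for all t, ‖w_t + 𝟙/√p‖₂ = 1, φ(w_t) ≤ 5π/12, and −3(𝟙ᵀa*)² ≤ (𝟙ᵀa*)(𝟙ᵀa_t) − (𝟙ᵀa*)² ≤ 0. Then there is an absolute constant c > 0 such that for all t ≥ c/η_a, (1/5)‖a*‖₂² ≤ a_tᵀa* ≤ 3‖a*‖₂² + 2(𝟙ᵀa*)²; moreover the upper bound a_tᵀa* ≤ 3‖a*‖₂² + 2(𝟙ᵀa*)² holds for all t ≥ 0. -/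
open Real
open scoped BigOperators

noncomputable section

/-- Euclidean dot product on `ℝ^n`. -/
def dotp {n : ℕ} (u v : Fin n → ℝ) : ℝ := ∑ i, u i * v i

/-- Euclidean norm `‖u‖₂` on `ℝ^n`. -/
def nrm {n : ℕ} (u : Fin n → ℝ) : ℝ := Real.sqrt (dotp u u)

/-- The shortcut vector `𝟙/√p ∈ ℝ^p`. -/
def sc (p : ℕ) : Fin p → ℝ := fun _ => 1 / Real.sqrt p

/-- The angle kernel `g(φ) = (π − φ)cos φ + sin φ`. -/
def gker (φ : ℝ) : ℝ := (π - φ) * Real.cos φ + Real.sin φ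

/-- The angle `φ(w) = arccos((𝟙/√p + w)ᵀ v*)`. -/
def phiAngle {p : ℕ} (vstar w : Fin p → ℝ) : ℝ := Real.arccos (dotp (sc p + w) vstar)

/-- Population gradient map with respect to the output weight `a`:
`G_a(w,a) = (1/(2π))(𝟙𝟙ᵀ + (π−1)I)a − (1/(2π))(𝟙𝟙ᵀ + (g(φ(w))−1)I)a*`. -/
def Ga {p k : ℕ} (vstar : Fin p → ℝ) (astar : Fin k → ℝ)
    (w : Fin p → ℝ) (a : Fin k → ℝ) : Fin k → ℝ :=
  fun i => (1 / (2 * π)) * ((∑ j, a j) + (π - 1) * a i)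
    - (1 / (2 * π)) * ((∑ j, astar j) + (gker (phiAngle vstar w) - 1) * astar i)

/-- Population gradient map with respect to the convolutional weight `w`:
`G_w(w,a) = −((aᵀa*)(π − φ(w))/(2π))(I − vvᵀ)v*`, where `v = 𝟙/√p + w`. -/
def Gw {p k : ℕ} (vstar : Fin p → ℝ) (astar : Fin k → ℝ)
    (w : Fin p → ℝ) (a : Fin k → ℝ) : Fin p → ℝ :=
  fun i => -(dotp a astar * (π - phiAngle vstar w) / (2 * π))
    * (vstar i - dotp (sc p + w) vstar * (sc p + w) i)

/-- One gradient descent step on `w` followed by the normalization step: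
`w̃⁺ = w − η_w G_w(w,a)`, `w⁺ = (𝟙/√p + w̃⁺)/‖𝟙/√p + w̃⁺‖₂ − 𝟙/√p`. -/
def wStep {p k : ℕ} (vstar : Fin p → ℝ) (astar : Fin k → ℝ) (ηw : ℝ)
    (wt : Fin p → ℝ) (at' : Fin k → ℝ) : Fin p → ℝ :=
  (nrm (sc p + (wt - ηw • Gw vstar astar wt at')))⁻¹ •
    (sc p + (wt - ηw • Gw vstar astar wt at')) - sc p

/-- One gradient descent step on `a`: `a⁺ = a − η_a G_a(w,a)`. -/
def aStep {p k : ℕ} (vstar : Fin p → ℝ) (astar : Fin k → ℝ) (ηa : ℝ)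
    (wt : Fin p → ℝ) (at' : Fin k → ℝ) : Fin k → ℝ :=
  at' - ηa • Ga vstar astar wt at'

lemma gker_le_pi {φ : ℝ} (h0 : 0 ≤ φ) (h1 : φ ≤ π) : gker φ ≤ π := by
  have h2 : Real.cos φ ≤ 1 := Real.cos_le_one φ
  have h3 : Real.sin φ ≤ φ := Real.sin_le h0
  have h4 : (π - φ) * Real.cos φ ≤ (π - φ) := by nlinarith
  unfold gker; linarith

lemma gker_hasDeriv (x : ℝ) : HasDerivAt gker (-(π - x) * Real.sin x) x := by
  have h1 : HasDerivAt (fun x : ℝ => (π - x)) (-1) x := by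
    simpa using (hasDerivAt_id x).const_sub π
  have h2 : HasDerivAt (fun x : ℝ => (π - x) * Real.cos x)
      ((-1) * Real.cos x + (π - x) * (-Real.sin x)) x :=
    h1.mul (Real.hasDerivAt_cos x)
  have h3 := h2.add (Real.hasDerivAt_sin x)
  exact h3.congr_deriv (by ring)

lemma gker_anti {φ : ℝ} (h0 : 0 ≤ φ) (h1 : φ ≤ 5 * π / 12) :
    gker (5 * π / 12) ≤ gker φ := by
  have hπ : (3:ℝ) < π := Real.pi_gt_three
  have hanti : AntitoneOn gker (Set.Icc 0 (5 * π / 12)) := by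
    apply antitoneOn_of_deriv_nonpos (convex_Icc _ _)
    · exact fun x _ => (gker_hasDeriv x).continuousAt.continuousWithinAt
    · intro x hx
      exact (gker_hasDeriv x).differentiableAt.differentiableWithinAt
    · intro x hx
      rw [interior_Icc] at hx
      rw [(gker_hasDeriv x).deriv]
      have hs : 0 ≤ Real.sin x :=
        Real.sin_nonneg_of_nonneg_of_le_pi hx.1.le (by nlinarith [hx.2])
      nlinarith [hx.2]
  exact hanti ⟨h0, h1⟩ ⟨by positivity, le_refl _⟩ h1

lemma gker_num : 68 * (π - 1) ≤ 339 * (gker (5 * π / 12) - 1) := by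
  have h512 : (5 * π / 12 : ℝ) = π / 4 + π / 6 := by ring
  have hcos : Real.cos (5 * π / 12) = √2 / 2 * (√3 / 2) - √2 / 2 * (1 / 2) := by
    rw [h512, Real.cos_add, Real.cos_pi_div_four, Real.cos_pi_div_six,
      Real.sin_pi_div_four, Real.sin_pi_div_six]
  have hsin : Real.sin (5 * π / 12) = √2 / 2 * (√3 / 2) + √2 / 2 * (1 / 2) := by
    rw [h512, Real.sin_add, Real.cos_pi_div_four, Real.cos_pi_div_six,
      Real.sin_pi_div_four, Real.sin_pi_div_six]
  have h2l : (1.4142 : ℝ) ≤ √2 := by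
    rw [show (1.4142:ℝ) = √(1.4142^2) by rw [Real.sqrt_sq]; norm_num]
    exact Real.sqrt_le_sqrt (by norm_num)
  have h2u : √2 ≤ (1.41422 : ℝ) := by
    rw [show (1.41422:ℝ) = √(1.41422^2) by rw [Real.sqrt_sq]; norm_num]
    exact Real.sqrt_le_sqrt (by norm_num)
  have h3l : (1.732 : ℝ) ≤ √3 := by
    rw [show (1.732:ℝ) = √(1.732^2) by rw [Real.sqrt_sq]; norm_num]
    exact Real.sqrt_le_sqrt (by norm_num)
  have h3u : √3 ≤ (1.73206 : ℝ) := by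
    rw [show (1.73206:ℝ) = √(1.73206^2) by rw [Real.sqrt_sq]; norm_num]
    exact Real.sqrt_le_sqrt (by norm_num)
  have hπl : (3.1415 : ℝ) < π := Real.pi_gt_d4
  have hπu : π < (3.1416 : ℝ) := Real.pi_lt_d4
  have hst : (2.449 : ℝ) ≤ √2 * √3 := by nlinarith
  unfold gker
  rw [hcos, hsin]
  nlinarith [mul_le_mul_of_nonneg_right hπu.le (by nlinarith : (0:ℝ) ≤ √2 * √3 - √2),
    mul_le_mul_of_nonneg_left h2u (by norm_num : (0:ℝ) ≤ 339/8)]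
lemma dot_step {p k : ℕ} (vstar : Fin p → ℝ) (astar : Fin k → ℝ) (ηa : ℝ)
    (wt : Fin p → ℝ) (at' : Fin k → ℝ) :
    dotp (aStep vstar astar ηa wt at') astar =
      (1 - ηa * (π - 1) / (2 * π)) * dotp at' astar
      + ηa / (2 * π) * ((gker (phiAngle vstar wt) - 1) * dotp astar astar
        + ((∑ j, astar j) ^ 2 - (∑ j, astar j) * (∑ j, at' j))) := by
  have hπ : (2 * π) ≠ 0 := by positivity
  have key : ∀ i, (at' i - ηa * ((1 / (2 * π)) * ((∑ j, at' j) + (π - 1) * at' i)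
        - (1 / (2 * π)) * ((∑ j, astar j) + (gker (phiAngle vstar wt) - 1) * astar i))) * astar i
      = (1 - ηa * (π - 1) / (2 * π)) * (at' i * astar i)
        + (ηa * ((∑ j, astar j) - (∑ j, at' j)) / (2 * π)) * astar i
        + (ηa * (gker (phiAngle vstar wt) - 1) / (2 * π)) * (astar i * astar i) := by
    intro i; field_simp; ring
  simp only [dotp, aStep, Pi.sub_apply, Pi.smul_apply, smul_eq_mul, Ga]
  rw [Finset.sum_congr rfl (fun i _ => key i), Finset.sum_add_distrib,
    Finset.sum_add_distrib, ← Finset.mul_sum, ← Finset.mul_sum, ← Finset.mul_sum]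
  field_simp
  ring

set_option maxHeartbeats 1000000 in
/-- Lemma: `aᵀa*` stays positive and bounded. There is an absolute constant `c > 0`
such that for all `t ≥ c/η_a`, `(1/5)‖a*‖₂² ≤ a_tᵀa* ≤ 3‖a*‖₂² + 2(𝟙ᵀa*)²`;
moreover the upper bound holds for all `t ≥ 0`. -/
theorem stmt9 :
    ∃ c > (0 : ℝ),
      ∀ (p k : ℕ), 0 < p → 0 < k →
      ∀ (vstar : Fin p → ℝ), nrm vstar = 1 →
      ∀ (astar : Fin k → ℝ), astar ≠ 0 →
      ∀ ηa : ℝ, 0 < ηa → ηa < 2 * π / (π - 1) →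
      ∀ (w : ℕ → Fin p → ℝ) (a : ℕ → Fin k → ℝ),
        (1 / 20) * dotp astar astar ≤ dotp (a 0) astar →
        dotp (a 0) astar ≤ 2 * dotp astar astar →
        (∀ t, a (t + 1) = aStep vstar astar ηa (w t) (a t)) →
        (∀ t, nrm (w t + sc p) = 1) →
        (∀ t, phiAngle vstar (w t) ≤ 5 * π / 12) →
        (∀ t, -3 * (∑ j, astar j) ^ 2 ≤
            (∑ j, astar j) * (∑ j, a t j) - (∑ j, astar j) ^ 2 ∧
          (∑ j, astar j) * (∑ j, a t j) - (∑ j, astar j) ^ 2 ≤ 0) →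
        (∀ t : ℕ, c / ηa ≤ (t : ℝ) →
          (1 / 5) * dotp astar astar ≤ dotp (a t) astar ∧
          dotp (a t) astar ≤ 3 * dotp astar astar + 2 * (∑ j, astar j) ^ 2) ∧
        (∀ t : ℕ, dotp (a t) astar ≤ 3 * dotp astar astar + 2 * (∑ j, astar j) ^ 2) := by
  have hπ3 : (3:ℝ) < π := Real.pi_gt_three
  have hπ4 : π < 3.15 := Real.pi_lt_d2
  have hπne : π ≠ 0 := by linarith
  have hπ1ne : (π - 1) ≠ 0 := by linarith
  refine ⟨680 * π / (π - 1), div_pos (by positivity) (by linarith), ?_⟩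
  intro p k hp hk vstar hv astar hastar ηa hηa hηa2 w a h0low h0up hrec hw hφ hSb
  set N := dotp astar astar with hN
  set S := ∑ j, astar j with hSdef
  have hNpos : 0 < N := by
    obtain ⟨i, hi⟩ := Function.ne_iff.mp hastar
    have h1 : astar i * astar i ≤ N := by
      rw [hN]
      exact Finset.single_le_sum (f := fun j => astar j * astar j)
        (fun j _ => mul_self_nonneg _) (Finset.mem_univ i)
    nlinarith [mul_self_pos.mpr hi]
  clear_value N S
  set lam := ηa * (π - 1) / (2 * π) with hlam
  have hlam0 : 0 < lam := div_pos (mul_pos hηa (by linarith)) (by positivity)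
  have hlam1 : lam < 1 := by
    rw [hlam, div_lt_one (by positivity)]
    calc ηa * (π - 1) < (2 * π / (π - 1)) * (π - 1) :=
          mul_lt_mul_of_pos_right hηa2 (by linarith)
      _ = 2 * π := div_mul_cancel₀ _ hπ1ne
  clear_value lam
  set g0 := gker (5 * π / 12) with hg0
  have hg0num : 68 * (π - 1) ≤ 339 * (g0 - 1) := gker_num
  have hg0pos : 0 < g0 - 1 := by nlinarith
  have hganti : ∀ t, g0 ≤ gker (phiAngle vstar (w t)) :=
    fun t => gker_anti (Real.arccos_nonneg _) (hφ t)
  clear_value g0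
  set L := (g0 - 1) / (π - 1) * N with hL
  have hLpos : 0 < L := by
    rw [hL]; exact mul_pos (div_pos hg0pos (by linarith)) hNpos
  clear_value L
  have hrecb : ∀ t, (1 - lam) * dotp (a t) astar + lam * L ≤ dotp (a (t + 1)) astar ∧
      dotp (a (t + 1)) astar ≤ (1 - lam) * dotp (a t) astar + lam * (3 * N + 2 * S ^ 2) := by
    intro t
    have heq : dotp (a (t + 1)) astar = (1 - lam) * dotp (a t) astar
        + ηa / (2 * π) * ((gker (phiAngle vstar (w t)) - 1) * N + (S ^ 2 - S * (∑ j, a t j))) := by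
      rw [hrec t, dot_step, ← hSdef, ← hN, ← hlam]
    have hgl : g0 ≤ gker (phiAngle vstar (w t)) := hganti t
    have hgu : gker (phiAngle vstar (w t)) ≤ π :=
      gker_le_pi (Real.arccos_nonneg _) (Real.arccos_le_pi _)
    obtain ⟨hd1, hd2⟩ := hSb t
    have hη2π : 0 < ηa / (2 * π) := by positivity
    have hidlo : lam * L = ηa / (2 * π) * ((g0 - 1) * N) := by
      rw [hlam, hL]; field_simp
    have hidhi : lam * (3 * N + 2 * S ^ 2) = ηa / (2 * π) * ((π - 1) * (3 * N + 2 * S ^ 2)) := by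
      rw [hlam]; field_simp
    constructor
    · rw [heq, hidlo]
      have h9 : (g0 - 1) * N ≤ (gker (phiAngle vstar (w t)) - 1) * N + (S ^ 2 - S * (∑ j, a t j)) := by
        nlinarith [hNpos.le]
      nlinarith [mul_le_mul_of_nonneg_left h9 hη2π.le]
    · rw [heq, hidhi]
      have h9 : (gker (phiAngle vstar (w t)) - 1) * N + (S ^ 2 - S * (∑ j, a t j))
          ≤ (π - 1) * (3 * N + 2 * S ^ 2) := by
        nlinarith [hNpos.le, sq_nonneg S]
      nlinarith [mul_le_mul_of_nonneg_left h9 hη2π.le]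
  have hupper : ∀ t, dotp (a t) astar ≤ 3 * N + 2 * S ^ 2 := by
    intro t
    induction t with
    | zero => nlinarith [sq_nonneg S]
    | succ n ih =>
      have h2 := (hrecb n).2
      nlinarith
  have hlower : ∀ t, L - (1 - lam) ^ t * L ≤ dotp (a t) astar := by
    intro t
    induction t with
    | zero => simp only [pow_zero, one_mul, sub_self]; linarith
    | succ n ih =>
      have h1 := (hrecb n).1
      have hpow : (0:ℝ) ≤ (1 - lam) ^ n := pow_nonneg (by linarith) n
      have hmul := mul_le_mul_of_nonneg_left ih (by linarith : (0:ℝ) ≤ 1 - lam)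
      have hring : (1 - lam) * (L - (1 - lam) ^ n * L) + lam * L
          = L - (1 - lam) ^ (n + 1) * L := by ring
      linarith
  refine ⟨fun t ht => ⟨?_, hupper t⟩, hupper⟩
  have hηt : 680 * π / (π - 1) ≤ ηa * t := by
    rw [div_le_iff₀ hηa] at ht
    linarith [ht]
  have h340 : (340:ℝ) ≤ lam * t := by
    have h1 : lam * t = (ηa * t) * ((π - 1) / (2 * π)) := by rw [hlam]; ring
    have h2 : (340:ℝ) = (680 * π / (π - 1)) * ((π - 1) / (2 * π)) := by
      field_simp; ring
    rw [h1, h2]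
    exact mul_le_mul_of_nonneg_right hηt (div_nonneg (by linarith) (by positivity))
  have hpowle : (1 - lam) ^ t ≤ 1 / 341 := by
    have hber : 1 + (t:ℝ) * lam ≤ (1 + lam) ^ t := one_add_mul_le_pow (by linarith) t
    have h1p : (0:ℝ) < (1 + lam) ^ t := by positivity
    have hprod : (1 - lam) ^ t * (1 + lam) ^ t ≤ 1 := by
      rw [← mul_pow]
      exact pow_le_one₀ (by nlinarith) (by nlinarith)
    calc (1 - lam) ^ t ≤ 1 / (1 + lam) ^ t := by rw [le_div_iff₀ h1p]; exact hprod
      _ ≤ 1 / (1 + (t:ℝ) * lam) := one_div_le_one_div_of_le (by nlinarith) hber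
      _ ≤ 1 / 341 := one_div_le_one_div_of_le (by norm_num) (by nlinarith)
  have hkey : 341 * (π - 1) ≤ 1700 * (g0 - 1) := by linarith
  have h5 : N / 5 ≤ 340 / 341 * L := by
    rw [hL, show (340:ℝ) / 341 * ((g0 - 1) / (π - 1) * N) = (340 * (g0 - 1) * N) / (341 * (π - 1)) by
      field_simp]
    rw [div_le_div_iff₀ (by norm_num) (by nlinarith : (0:ℝ) < 341 * (π - 1))]
    nlinarith [hNpos.le, mul_le_mul_of_nonneg_right hkey hNpos.le]
  have hlowt := hlower t
  have hmono := mul_le_mul_of_nonneg_right hpowle hLpos.le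
  linarith
end
end

section
/- (Partial dissipativity of G_w.) Let m > 0, write w* = v* − 𝟙/√p, and let (w,a) ∈ ℝ^p × ℝ^k satisfy ‖w + 𝟙/√p‖₂ = 1, (w + 𝟙/√p)ᵀv* ≥ 0, and aᵀa* ≥ m. Then ⟨−G_w(w,a), w* − w⟩ ≥ (m/8)‖w − w*‖₂². -/
open Real
open scoped BigOperators

noncomputable section

lemma dotp_nonneg' {n : ℕ} (u : Fin n → ℝ) : 0 ≤ dotp u u :=
  Finset.sum_nonneg fun i _ => mul_self_nonneg _

lemma expand1 {p : ℕ} (w vstar : Fin p → ℝ) :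
    dotp (w - (vstar - sc p)) (w - (vstar - sc p)) =
      dotp (sc p + w) (sc p + w) - 2 * dotp (sc p + w) vstar + dotp vstar vstar := by
  simp only [dotp, Pi.sub_apply, Pi.add_apply, Finset.mul_sum,
    ← Finset.sum_sub_distrib, ← Finset.sum_add_distrib]
  exact Finset.sum_congr rfl fun i _ => by ring

lemma expand2 {p : ℕ} (w vstar : Fin p → ℝ) (K c : ℝ) :
    dotp (fun i => K * (vstar i - c * ((sc p + w) i))) ((vstar - sc p) - w) =
      K * (dotp vstar vstar - (1 + c) * dotp (sc p + w) vstar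
        + c * dotp (sc p + w) (sc p + w)) := by
  simp only [dotp, Pi.sub_apply, Pi.add_apply, Finset.mul_sum,
    ← Finset.sum_sub_distrib, ← Finset.sum_add_distrib]
  exact Finset.sum_congr rfl fun i _ => by ring

/-- Partial dissipativity of `G_w` on the set `𝒦_m`, with `w* = v* − 𝟙/√p`. -/
theorem stmt11 (p k : ℕ) (hp : 0 < p) (hk : 0 < k)
    (vstar : Fin p → ℝ) (hv : nrm vstar = 1)
    (astar : Fin k → ℝ)
    (m : ℝ) (hm : 0 < m)
    (w : Fin p → ℝ) (a : Fin k → ℝ)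
    (hw : nrm (w + sc p) = 1)
    (hpos : 0 ≤ dotp (w + sc p) vstar)
    (ha : m ≤ dotp a astar) :
    (m / 8) * dotp (w - (vstar - sc p)) (w - (vstar - sc p)) ≤
      dotp (-(Gw vstar astar w a)) ((vstar - sc p) - w) := by
  have hcomm : w + sc p = sc p + w := add_comm _ _
  rw [hcomm] at hw hpos
  -- unit norms
  have hvv : dotp (sc p + w) (sc p + w) = 1 := by
    have h0 := dotp_nonneg' (sc p + w)
    have := Real.sq_sqrt h0
    rw [show Real.sqrt (dotp (sc p + w) (sc p + w)) = 1 from hw] at this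
    nlinarith
  have hvsvs : dotp vstar vstar = 1 := by
    have h0 := dotp_nonneg' vstar
    have := Real.sq_sqrt h0
    rw [show Real.sqrt (dotp vstar vstar) = 1 from hv] at this
    nlinarith
  set c : ℝ := dotp (sc p + w) vstar with hc_def
  set s : ℝ := dotp a astar with hs_def
  set φ : ℝ := phiAngle vstar w with hφ_def
  set K : ℝ := s * (π - φ) / (2 * π) with hK_def
  -- c ≤ 1 by Cauchy–Schwarz
  have hcs : c ^ 2 ≤ 1 := by
    have h := Finset.sum_mul_sq_le_sq_mul_sq Finset.univ (sc p + w) vstar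
    have e1 : ∑ i, (sc p + w) i ^ 2 = dotp (sc p + w) (sc p + w) := by
      simp [dotp, sq]
    have e2 : ∑ i, vstar i ^ 2 = dotp vstar vstar := by simp [dotp, sq]
    rw [e1, e2, hvv, hvsvs] at h
    simpa [hc_def, dotp] using h
  have hc1 : c ≤ 1 := by nlinarith
  -- angle bounds
  have hφle : φ ≤ π / 2 := by
    rw [hφ_def, phiAngle]
    exact Real.arccos_le_pi_div_two.mpr hpos
  have hπ : (0:ℝ) < π := Real.pi_pos
  -- rewrite both sides
  have hlhs : dotp (w - (vstar - sc p)) (w - (vstar - sc p)) = 2 - 2 * c := by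
    rw [expand1, hvv, hvsvs, ← hc_def]; ring
  have hGfun : -(Gw vstar astar w a) = fun i => K * (vstar i - c * ((sc p + w) i)) := by
    funext i
    simp only [Gw, Pi.neg_apply, ← hs_def, ← hφ_def, ← hc_def, ← hK_def, Pi.add_apply]
    ring
  have hrhs : dotp (-(Gw vstar astar w a)) ((vstar - sc p) - w) = K * (1 - c ^ 2) := by
    rw [hGfun, expand2, hvsvs, hvv, ← hc_def]; ring
  rw [hlhs, hrhs]
  -- final inequality
  have hs0 : m ≤ s := ha
  have hKge : m * (π / 2) ≤ s * (π - φ) := by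
    apply mul_le_mul hs0 (by linarith) (by linarith) (by linarith)
  have h1c : 0 ≤ 1 - c := by linarith
  have hstep : m * (π / 2) * 1 ≤ s * (π - φ) * (1 + c) := by
    have hA : 0 ≤ s * (π - φ) := le_trans (by positivity) hKge
    apply mul_le_mul hKge (by linarith) (by norm_num) hA
  have hprod : 0 ≤ (1 - c) * (s * (π - φ) * (1 + c) - m * (π / 2)) := by
    apply mul_nonneg h1c; linarith
  rw [hK_def, show s * (π - φ) / (2 * π) * (1 - c ^ 2)
      = (s * (π - φ) * (1 - c ^ 2)) / (2 * π) from by ring,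
    show m / 8 * (2 - 2 * c) = (m * (1 - c) * (2 * π)) / (2 * π * 4) from by
      field_simp; ring]
  rw [div_le_div_iff₀ (by positivity) (by positivity)]
  nlinarith [hprod, hπ]
end
end
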